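/- arXiv:1801.04542 — 3 statements merged into one kernel-verified Lean document; each statement's English description precedes it below -/
import Mathlib

section
/- (Kronecker) Let α be an algebraic integer, all of whose conjugates (roots of its minimal polynomial over ℚ) have complex absolute value equal to 1. Then α is a root of unity. -/
/-!
Kronecker's theorem for number fields says that an algebraic integer of a number field `K` whose
images under all embeddings `K →+* A` have norm one is a root of unity. Apply it to the generator
of `K = ℚ⟮α⟯`: its images under these embeddings are roots of the minimal polynomial of `α`.
-/

open IntermediateField Polynomial

theorem Polynomial.aeval_ringHom_apply_of_rat {K A : Type*} [Ring K] [Algebra ℚ K] [Ring A]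
    [Algebra ℚ A] (φ : K →+* A) (x : K) (p : ℚ[X]) : aeval (φ x) p = φ (aeval x p) := by
  rw [aeval_def, aeval_def, hom_eval₂, RingHom.ext_rat (φ.comp (algebraMap ℚ K)) (algebraMap ℚ A)]

theorem IsIntegral.exists_pow_eq_one_of_forall_root_norm_eq_one {A : Type*} [NormedField A]
    [IsAlgClosed A] [NormedAlgebra ℚ A] {α : A} (hint : IsIntegral ℤ α)
    (h : ∀ β : A, aeval β (minpoly ℚ α) = 0 → ‖β‖ = 1) : ∃ n : ℕ, 0 < n ∧ α ^ n = 1 := by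
  -- Instance search would find `DivisionRing.toRatAlgebra`, not the structure inherited from `A`
  -- that `aeval_gen_minpoly` is stated with.
  let : Algebra ℚ ℚ⟮α⟯ := ℚ⟮α⟯.algebra'
  have : Module.Finite ℚ ℚ⟮α⟯ := adjoin.finiteDimensional hint.tower_top
  have : NumberField ℚ⟮α⟯ := .of_module_finite ℚ ℚ⟮α⟯
  have hgen : IsIntegral ℤ (AdjoinSimple.gen ℚ α) := IsIntegral.tower_bot_of_field (B := A) hint
  obtain ⟨n, hn, hpow⟩ := NumberField.Embeddings.pow_eq_one_of_norm_eq_one ℚ⟮α⟯ A hgen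
    fun φ ↦ h _ (by rw [aeval_ringHom_apply_of_rat, aeval_gen_minpoly, map_zero])
  exact ⟨n, hn, by simpa using congrArg ((↑) : ℚ⟮α⟯ → A) hpow⟩

theorem kronecker_theorem (α : ℂ) (hint : IsIntegral ℤ α)
    (h : ∀ β : ℂ, Polynomial.aeval β (minpoly ℚ α) = 0 → ‖β‖ = 1) :
    ∃ n : ℕ, 0 < n ∧ α ^ n = 1 :=
  hint.exists_pow_eq_one_of_forall_root_norm_eq_one h
end

section
/- Let m > n ≥ 1 be distinct positive integers such that neither m/n nor n/m is a power of a prime (i.e. m/n is not of the form p^r with p prime and r a nonzero integer). Then the resultant of the cyclotomic polynomials Φ_m and Φ_n equals ±1. -/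
/-!
An integer divisible by no prime is `±1`, and reduction modulo `p` commutes with the resultant,
so it suffices that `Φ_m` and `Φ_n` are coprime over `𝔽_p` for every prime `p`: over a field,
a resultant vanishes exactly when the two polynomials have a common factor. In characteristic
`p`, every root of `Φ_n` is a primitive root of unity whose order is the prime-to-`p` part of `n`.
A common root of `Φ_m` and `Φ_n` therefore forces `m` and `n` to have the same prime-to-`p`
part, that is, `m / n` is a power of `p`.
-/

/-- The Sylvester matrix of two integer polynomials `p`, `q` (with respect to their
natural degrees): the first `q.natDegree` rows contain shifted coefficient vectors of `p`,
the remaining `p.natDegree` rows contain shifted coefficient vectors of `q`. -/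
noncomputable def sylvesterMatrix (p q : Polynomial ℤ) :
    Matrix (Fin (q.natDegree + p.natDegree)) (Fin (q.natDegree + p.natDegree)) ℤ :=
  Matrix.of fun i j =>
    if (i : ℕ) < q.natDegree then
      (if (j : ℕ) ≤ p.natDegree + (i : ℕ) then p.coeff (p.natDegree + (i : ℕ) - (j : ℕ)) else 0)
    else
      (if (j : ℕ) ≤ q.natDegree + ((i : ℕ) - q.natDegree) then
        q.coeff (q.natDegree + ((i : ℕ) - q.natDegree) - (j : ℕ)) else 0)

/-- The resultant of two integer polynomials, as the determinant of their Sylvester matrix. -/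
noncomputable def resultant (p q : Polynomial ℤ) : ℤ :=
  (sylvesterMatrix p q).det

open scoped Polynomial Matrix

theorem sylvesterMatrix_eq_submatrix_transpose_sylvester (p q : ℤ[X]) :
    sylvesterMatrix p q = (Polynomial.sylvester p q p.natDegree q.natDegree)ᵀ.submatrix
      ((finCongr (add_comm _ _)).trans Fin.revPerm)
      ((finCongr (add_comm _ _)).trans Fin.revPerm) := by
  ext ⟨i, hi⟩ ⟨j, hj⟩
  simp only [sylvesterMatrix, Polynomial.sylvester, Matrix.of_apply, Matrix.submatrix_apply,
    Matrix.transpose_apply, Equiv.trans_apply, Fin.revPerm_apply, finCongr_apply, Fin.cast_mk,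
    Fin.val_rev, Fin.addCases, Set.mem_Icc, Fin.val_castLT, Fin.val_subNat, Fin.val_cast,
    eq_rec_constant]
  split_ifs
  all_goals first
    | omega
    | (congr 1; omega)
    | exact Polynomial.coeff_eq_zero_of_natDegree_lt (by omega)

theorem resultant_eq_polynomial_resultant (p q : ℤ[X]) : resultant p q = p.resultant q := by
  rw [resultant, sylvesterMatrix_eq_submatrix_transpose_sylvester, Matrix.det_submatrix_equiv_self,
    Matrix.det_transpose, Polynomial.resultant]

theorem Int.isUnit_of_forall_prime_not_dvd {a : ℤ}
    (h : ∀ p : ℕ, p.Prime → ¬ (p : ℤ) ∣ a) : IsUnit a := by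
  rw [Int.isUnit_iff_natAbs_eq, Nat.eq_one_iff_not_exists_prime_dvd]
  exact fun p hp hdvd ↦ h p hp (Int.natCast_dvd.mpr hdvd)

theorem Nat.exists_eq_mul_pow_of_ordCompl_eq {p m n : ℕ} (h : ordCompl[p] m = ordCompl[p] n) :
    ∃ r, m = n * p ^ r ∨ n = m * p ^ r := by
  obtain ⟨a, b, c, rfl, rfl⟩ : ∃ a b c, m = p ^ a * c ∧ n = p ^ b * c :=
    ⟨_, _, _, h ▸ (Nat.ordProj_mul_ordCompl_eq_self m p).symm,
      (Nat.ordProj_mul_ordCompl_eq_self n p).symm⟩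
  rcases le_total a b with hle | hle
  · obtain ⟨k, rfl⟩ := Nat.exists_eq_add_of_le hle
    exact ⟨k, Or.inr (by ring)⟩
  · obtain ⟨k, rfl⟩ := Nat.exists_eq_add_of_le hle
    exact ⟨k, Or.inl (by ring)⟩

namespace Polynomial

theorem isPrimitiveRoot_ordCompl_of_isRoot_cyclotomic {K : Type*} [CommRing K]
    [IsDomain K] (p : ℕ) [Fact p.Prime] [CharP K p] {n : ℕ} (hn : n ≠ 0) {μ : K}
    (hμ : (cyclotomic n K).IsRoot μ) : IsPrimitiveRoot μ (ordCompl[p] n) := by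
  have : NeZero ((ordCompl[p] n : ℕ) : K) :=
    ⟨(CharP.cast_eq_zero_iff K p _).not.mpr (Nat.not_dvd_ordCompl Fact.out hn)⟩
  rwa [← Nat.ordProj_mul_ordCompl_eq_self n p,
    isRoot_cyclotomic_prime_pow_mul_iff_of_charP] at hμ

theorem isCoprime_cyclotomic_of_ordCompl_ne {K : Type*} [Field K] (p : ℕ)
    [Fact p.Prime] [CharP K p] {m n : ℕ} (hm : m ≠ 0) (hn : n ≠ 0)
    (h : ordCompl[p] m ≠ ordCompl[p] n) : IsCoprime (cyclotomic m K) (cyclotomic n K) := by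
  let L := AlgebraicClosure K
  have : CharP L p := charP_of_injective_algebraMap (algebraMap K L).injective p
  refine (isCoprime_iff_aeval_ne_zero_of_isAlgClosed K L _ _).mpr fun μ ↦ not_and_or.mp ?_
  rintro ⟨hμm, hμn⟩
  rw [aeval_def, eval₂_eq_eval_map, map_cyclotomic] at hμm hμn
  exact h ((isPrimitiveRoot_ordCompl_of_isRoot_cyclotomic p hm hμm).unique
    (isPrimitiveRoot_ordCompl_of_isRoot_cyclotomic p hn hμn))

theorem intCast_resultant_cyclotomic (R : Type*) [CommRing R] [Nontrivial R] (m n : ℕ) :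
    ((cyclotomic m ℤ).resultant (cyclotomic n ℤ) : R) =
      (cyclotomic m R).resultant (cyclotomic n R) := by
  rw [← map_cyclotomic_int m R, ← map_cyclotomic_int n R, resultant_map_map]
  simp only [map_cyclotomic_int, natDegree_cyclotomic, eq_intCast]

end Polynomial

theorem resultant_cyclotomic_eq_one_of_ratio_not_prime_pow
    (m n : ℕ) (hn : 1 ≤ n) (hmn : n < m)
    (h : ∀ p r : ℕ, p.Prime → 0 < r → m ≠ n * p ^ r ∧ n ≠ m * p ^ r) :
    resultant (Polynomial.cyclotomic m ℤ) (Polynomial.cyclotomic n ℤ) = 1 ∨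
    resultant (Polynomial.cyclotomic m ℤ) (Polynomial.cyclotomic n ℤ) = -1 := by
  rw [← Int.isUnit_iff, resultant_eq_polynomial_resultant]
  refine Int.isUnit_of_forall_prime_not_dvd fun p hp hdvd ↦ ?_
  have : Fact p.Prime := ⟨hp⟩
  have hordCompl : ordCompl[p] m ≠ ordCompl[p] n := fun heq ↦ by
    obtain ⟨r, hr⟩ := Nat.exists_eq_mul_pow_of_ordCompl_eq heq
    rcases r.eq_zero_or_pos with rfl | hr0
    · simp only [pow_zero, mul_one] at hr
      omega
    · exact hr.elim (h p r hp hr0).1 (h p r hp hr0).2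
  rw [← ZMod.intCast_zmod_eq_zero_iff_dvd, Polynomial.intCast_resultant_cyclotomic,
    Polynomial.resultant_eq_zero_iff] at hdvd
  exact hdvd.2 (Polynomial.isCoprime_cyclotomic_of_ordCompl_ne p (by omega) (by omega) hordCompl)
end

section
/- (Kummer) Let p be an odd prime and ζ a primitive p-th root of unity. Then every unit u of ℤ[ζ] can be written as u = ζᵃ · v, where a is an integer and v is a real unit (i.e. v is fixed by complex conjugation ζ ↦ ζ⁻¹). -/
/-!
Let `R = ℤ[ζ]`; it is stable under complex conjugation since `ζ̄ = ζ⁻¹ = ζ ^ (p - 1)`. For a unit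
`u` of `R`, `α = u / ū` lies in `R` and satisfies `α ᾱ = 1`. As `ℚ(ζ)` is a CM field, complex
conjugation commutes with all its complex embeddings, so every conjugate of `α` has absolute
value `1` and Kronecker's theorem makes `α` a root of unity, that is `α = ± ζ ^ r` since `p` is
odd. The sign is `+`: the ring map `R → 𝔽_p`, `ζ ↦ 1` (it exists because `Φ_p(1) = p`) does not
see conjugation, so `u = -ζ ^ r ū` would map the unit `u` to an element killed by `2`. Finally, if
`u = ζ ^ r ū` and `2a ≡ r (mod p)`, then `v = ζ ^ (-a) u` is real.
-/

open NumberField IsCMField Polynomial IntermediateField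
open scoped Algebra ComplexConjugate

theorem Subalgebra.coe_units_zpow {R K : Type*} [CommRing R] [Field K] [Algebra R K]
    (S : Subalgebra R K) (u : Sˣ) (k : ℤ) : (((u ^ k : Sˣ) : S) : K) = ((u : S) : K) ^ k := by
  have h := congrArg Units.val (map_zpow (Units.map (S.val : S →* K)) u k)
  rwa [Units.val_zpow_eq_zpow_val] at h

theorem IntermediateField.coe_complexConj (K : IntermediateField ℚ ℂ) [IsCMField K]
    [Algebra.IsIntegral ℚ K] (x : K) : (complexConj K x : ℂ) = conj (x : ℂ) :=
  complexEmbedding_complexConj K K.val.toRingHom x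

theorem NumberField.IsCMField.isOfFinOrder_of_mul_complexConj_eq_one {K : Type*} [Field K]
    [NumberField K] [IsCMField K] {x : K} (hx : IsIntegral ℤ x) (h : x * complexConj K x = 1) :
    IsOfFinOrder x := by
  suffices ∀ φ : K →+* ℂ, ‖φ x‖ = 1 by
    obtain ⟨n, hn, hxn⟩ := Embeddings.pow_eq_one_of_norm_eq_one K ℂ hx this
    exact isOfFinOrder_iff_pow_eq_one.2 ⟨n, hn, hxn⟩
  intro φ
  have hφ : (Complex.normSq (φ x) : ℂ) = 1 := by
    rw [← Complex.mul_conj, ← complexEmbedding_complexConj, ← map_mul, h, map_one]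
  rw [← pow_eq_one_iff_of_nonneg (norm_nonneg _) two_ne_zero, Complex.sq_norm]
  exact_mod_cast hφ

theorem Complex.exists_conj_zpow_neg_mul_eq_self {n r : ℕ} {ζ x : ℂ} (hζ : ζ ^ n = 1)
    (hodd : Odd n) (h : x = ζ ^ r * conj x) : ∃ a : ℤ, conj (ζ ^ (-a) * x) = ζ ^ (-a) * x := by
  obtain ⟨m, rfl⟩ := hodd
  have hζ0 : ζ ≠ 0 := by rintro rfl; simp at hζ
  have hconj : conj ζ = ζ⁻¹ := (inv_eq_conj (norm_eq_one_of_pow_eq_one hζ (by omega))).symm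
  have hpow : ζ ^ ((r * (2 * m + 1) : ℕ) : ℤ) = 1 := by
    rw [zpow_natCast, mul_comm, pow_mul, hζ, one_pow]
  -- `a = r (m + 1)` is a solution of `2a ≡ r (mod 2m + 1)`.
  set a : ℤ := ((r * (m + 1) : ℕ) : ℤ)
  have hkey : ζ ^ a = ζ ^ (-a) * ζ ^ r := by
    rw [← zpow_natCast ζ r, ← zpow_add₀ hζ0, ← mul_one (ζ ^ (-a + r)), ← hpow, ← zpow_add₀ hζ0]
    congr 1
    push_cast [a]
    ring
  refine ⟨a, ?_⟩
  rw [map_mul, map_zpow₀, hconj, inv_zpow', neg_neg, hkey, mul_assoc, ← h]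

namespace IsPrimitiveRoot

theorem intermediateField_adjoin_isCyclotomicExtension_rat {L : Type*} [Field L] [CharZero L]
    {n : ℕ} [NeZero n] {ζ : L} (hζ : IsPrimitiveRoot ζ n) :
    IsCyclotomicExtension {n} ℚ ℚ⟮ζ⟯ := by
  change IsCyclotomicExtension {n} ℚ ℚ⟮ζ⟯.toSubalgebra
  rw [adjoin_simple_toSubalgebra_of_isAlgebraic
    (hζ.isIntegral (NeZero.pos n)).tower_top.isAlgebraic]
  exact hζ.adjoin_isCyclotomicExtension ℚ

theorem exists_algHom_adjoin_zmod {p : ℕ} [Fact p.Prime] {K : Type*} [Field K] [CharZero K]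
    {ζ : K} (hζ : IsPrimitiveRoot ζ p) :
    ∃ φ : ℤ[ζ] →ₐ[ℤ] ZMod p, φ ⟨ζ, Algebra.self_mem_adjoin_singleton ℤ ζ⟩ = 1 := by
  have hp : 0 < p := (Fact.out : p.Prime).pos
  have hint := hζ.isIntegral hp
  have h1 : aeval (1 : ZMod p) (minpoly ℤ (Algebra.adjoin.powerBasis' hint).gen) = 0 := by
    rw [← Algebra.adjoin.powerBasis'_minpoly_gen, ← cyclotomic_eq_minpoly hζ hp, aeval_def,
      eval₂_eq_eval_map, map_cyclotomic, eval_one_cyclotomic_prime, ZMod.natCast_self]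
  refine ⟨(Algebra.adjoin.powerBasis' hint).lift 1 h1, ?_⟩
  rw [← Algebra.adjoin.powerBasis'_gen hint, PowerBasis.lift_gen]

variable {n : ℕ} {ζ : ℂ}

theorem exists_eq_pow_or_eq_neg_pow_of_mul_conj_eq_one (hζ : IsPrimitiveRoot ζ n) (hn : 2 < n)
    (hodd : Odd n) {x : ℂ} (hx : x ∈ ℤ[ζ]) (h : x * conj x = 1) :
    ∃ r : ℕ, x = ζ ^ r ∨ x = -ζ ^ r := by
  have : NeZero n := ⟨by omega⟩
  have := hζ.intermediateField_adjoin_isCyclotomicExtension_rat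
  have : NumberField ℚ⟮ζ⟯ := IsCyclotomicExtension.numberField {n} ℚ ℚ⟮ζ⟯
  have : IsCMField ℚ⟮ζ⟯ := IsCyclotomicExtension.Rat.isCMField ℚ⟮ζ⟯ ⟨n, Set.mem_singleton n, hn⟩
  have hxK : x ∈ ℚ⟮ζ⟯ := Algebra.adjoin_le (S := ℚ⟮ζ⟯.toSubalgebra.restrictScalars ℤ)
    (Set.singleton_subset_iff.2 (mem_adjoin_simple_self ℚ ζ)) hx
  have hint : IsIntegral ℤ (⟨x, hxK⟩ : ℚ⟮ζ⟯) :=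
    (isIntegral_algebraMap_iff (FaithfulSMul.algebraMap_injective ℚ⟮ζ⟯ ℂ)).mp
      (adjoin_le_integralClosure (hζ.isIntegral (NeZero.pos n)) hx)
  have hconj : (⟨x, hxK⟩ : ℚ⟮ζ⟯) * complexConj ℚ⟮ζ⟯ ⟨x, hxK⟩ = 1 :=
    Subtype.ext (by simpa [coe_complexConj] using h)
  have hζK : IsPrimitiveRoot (⟨ζ, mem_adjoin_simple_self ℚ ζ⟩ : ℚ⟮ζ⟯) n :=
    coe_submonoidClass_iff.mp hζ
  obtain ⟨r, -, hr⟩ := hζK.exists_pow_or_neg_mul_pow_of_isOfFinOrder hodd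
    (isOfFinOrder_of_mul_complexConj_eq_one hint hconj)
  exact ⟨r, by simpa [Subtype.ext_iff] using hr⟩

variable [NeZero n]

theorem conj_eq_pow_sub_one (hζ : IsPrimitiveRoot ζ n) : conj ζ = ζ ^ (n - 1) := by
  rw [← Complex.inv_eq_conj (Complex.norm_eq_one_of_pow_eq_one hζ.pow_eq_one (NeZero.ne n))]
  refine inv_eq_of_mul_eq_one_right ?_
  rw [← pow_succ', Nat.sub_add_cancel (NeZero.pos n), hζ.pow_eq_one]

theorem conj_mem_adjoin (hζ : IsPrimitiveRoot ζ n) {x : ℂ} (hx : x ∈ ℤ[ζ]) : conj x ∈ ℤ[ζ] := by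
  have hle : ℤ[conj ζ] ≤ ℤ[ζ] := Algebra.adjoin_singleton_le
    (hζ.conj_eq_pow_sub_one ▸ pow_mem (Algebra.self_mem_adjoin_singleton ℤ ζ) _)
  have hmap : conj x ∈ ℤ[ζ].map (starRingEnd ℂ).toIntAlgHom := Subalgebra.mem_map.2 ⟨x, hx, rfl⟩
  rw [AlgHom.map_adjoin_singleton] at hmap
  exact hle hmap

theorem algHom_conj_eq (hζ : IsPrimitiveRoot ζ n) {A : Type*} [CommRing A] (φ : ℤ[ζ] →ₐ[ℤ] A)
    (hφ : φ ⟨ζ, Algebra.self_mem_adjoin_singleton ℤ ζ⟩ = 1) {x : ℂ} (hx : x ∈ ℤ[ζ]) :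
    φ ⟨conj x, hζ.conj_mem_adjoin hx⟩ = φ ⟨x, hx⟩ := by
  let c : ℤ[ζ] →ₐ[ℤ] ℤ[ζ] := ((starRingEnd ℂ).restrict _ _ fun _ ↦ hζ.conj_mem_adjoin).toIntAlgHom
  have hc : c ⟨ζ, Algebra.self_mem_adjoin_singleton ℤ ζ⟩ =
      ⟨ζ, Algebra.self_mem_adjoin_singleton ℤ ζ⟩ ^ (n - 1) :=
    Subtype.ext hζ.conj_eq_pow_sub_one
  have hφc : φ.comp c = φ := AlgHom.adjoin_ext fun y hy ↦ by
    rw [Set.mem_singleton_iff] at hy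
    subst hy
    rw [AlgHom.comp_apply, hc, map_pow, hφ, one_pow]
  exact DFunLike.congr_fun hφc ⟨x, hx⟩

theorem exists_adjoin_unit_coe_eq (hζ : IsPrimitiveRoot ζ n) :
    ∃ η : ℤ[ζ]ˣ, ((η : ℤ[ζ]) : ℂ) = ζ :=
  ⟨((coe_submonoidClass_iff.mp hζ :
    IsPrimitiveRoot (⟨ζ, Algebra.self_mem_adjoin_singleton ℤ ζ⟩ : ℤ[ζ]) n).isUnit
      (NeZero.ne n)).unit, rfl⟩

theorem exists_mul_conj_eq_one (hζ : IsPrimitiveRoot ζ n) (u : ℤ[ζ]ˣ) :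
    ∃ α ∈ ℤ[ζ], α * conj α = 1 ∧ ((u : ℤ[ζ]) : ℂ) = α * conj ((u : ℤ[ζ]) : ℂ) := by
  set x : ℂ := ((u : ℤ[ζ]) : ℂ)
  set y : ℂ := (((u⁻¹ : ℤ[ζ]ˣ) : ℤ[ζ]) : ℂ)
  have hxy : x * y = 1 := congrArg Subtype.val u.mul_inv
  refine ⟨x * conj y, mul_mem (u : ℤ[ζ]).2 (hζ.conj_mem_adjoin (u⁻¹ : ℤ[ζ]ˣ).1.2), ?_, ?_⟩
  · calc x * conj y * conj (x * conj y) = x * y * conj (x * y) := by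
          simp only [map_mul, Complex.conj_conj]; ring
      _ = 1 := by rw [hxy, map_one, one_mul]
  · calc x = x * conj (x * y) := by rw [hxy, map_one, mul_one]
      _ = x * conj y * conj x := by rw [map_mul]; ring

theorem coe_ne_neg_pow_mul_conj {p : ℕ} [Fact p.Prime] (hp : p ≠ 2)
    (hζ : IsPrimitiveRoot ζ p) (u : ℤ[ζ]ˣ) (r : ℕ) :
    ((u : ℤ[ζ]) : ℂ) ≠ -ζ ^ r * conj ((u : ℤ[ζ]) : ℂ) := by
  intro h
  obtain ⟨φ, hφ⟩ := hζ.exists_algHom_adjoin_zmod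
  set x : ℤ[ζ] := ↑u
  have hx : x = -⟨ζ, Algebra.self_mem_adjoin_singleton ℤ ζ⟩ ^ r *
      ⟨conj x, hζ.conj_mem_adjoin x.2⟩ := Subtype.ext h
  have h2 : 2 * φ x = 0 := by
    have hφx := congrArg φ hx
    rw [map_mul, map_neg, map_pow, hφ, one_pow, hζ.algHom_conj_eq φ hφ x.2] at hφx
    linear_combination hφx
  have h2p : ((2 : ℕ) : ZMod p) = 0 := by
    exact_mod_cast (u.isUnit.map φ).mul_left_eq_zero.mp h2
  rw [ZMod.natCast_eq_zero_iff] at h2p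
  exact hp ((Nat.prime_dvd_prime_iff_eq Fact.out Nat.prime_two).mp h2p)

end IsPrimitiveRoot

theorem kummer_unit_decomposition
    (p : ℕ) (hp : p.Prime) (hodd : Odd p) (ζ : ℂ) (hζ : IsPrimitiveRoot ζ p)
    (u : (Algebra.adjoin ℤ ({ζ} : Set ℂ))ˣ) :
    ∃ (a : ℤ) (v : (Algebra.adjoin ℤ ({ζ} : Set ℂ))ˣ),
      ((u : Algebra.adjoin ℤ ({ζ} : Set ℂ)) : ℂ) =
        ζ ^ a * ((v : Algebra.adjoin ℤ ({ζ} : Set ℂ)) : ℂ) ∧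
      (starRingEnd ℂ) ((v : Algebra.adjoin ℤ ({ζ} : Set ℂ)) : ℂ) =
        ((v : Algebra.adjoin ℤ ({ζ} : Set ℂ)) : ℂ) := by
  have : Fact p.Prime := ⟨hp⟩
  have hp2 : 2 < p := by
    have := hp.two_le
    have := Nat.odd_iff.mp hodd
    omega
  obtain ⟨α, hαR, hα, hu⟩ := hζ.exists_mul_conj_eq_one u
  obtain ⟨r, hr | hr⟩ := hζ.exists_eq_pow_or_eq_neg_pow_of_mul_conj_eq_one hp2 hodd hαR hα
  · obtain ⟨a, ha⟩ := Complex.exists_conj_zpow_neg_mul_eq_self hζ.pow_eq_one hodd (hr ▸ hu)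
    obtain ⟨η, hη⟩ := hζ.exists_adjoin_unit_coe_eq
    have hv : ((η ^ (-a) * u : ℤ[ζ]ˣ) : ℂ) = ζ ^ (-a) * (u : ℤ[ζ]) := by
      rw [Units.val_mul, Subalgebra.coe_mul, Subalgebra.coe_units_zpow, hη]
    refine ⟨a, η ^ (-a) * u, ?_, by rw [hv, ha]⟩
    rw [hv, ← mul_assoc, ← zpow_add₀ (hζ.ne_zero hp.ne_zero), add_neg_cancel, zpow_zero, one_mul]
  · exact absurd (hr ▸ hu) (hζ.coe_ne_neg_pow_mul_conj hp2.ne' u r)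
end
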